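/- arXiv:2312.07689 — 2 statements merged into one kernel-verified Lean document; each statement's English description precedes it below -/
import Mathlib

section
/- Assume 0 < λ < 1 and 1 < γ < 3. Let P₅ := (V₅, C₅) with V₅ := 2/(γ−3) and C₅ := (γ−1)/(3−γ), and let F_V, F_C, G_V, G_C denote the first-order partial derivatives of F and G evaluated at P₅. Then: (i) the Wronskian W := F_C·G_V − F_V·G_C is strictly positive; (ii) F_C + G_V < 0; (iii) the discriminant satisfies (F_C + G_V)² − 4W = C₅²·(2 + (ℓ−3)(1−λ))² > 0; and (iv) setting R := C₅·(2 + (ℓ−3)(1−λ)) (the positive square root of the discriminant), the primary and secondary slopes L₁ := (F_C − G_V + R)/(2G_C) and L₂ := (F_C − G_V − R)/(2G_C) satisfy L₁ = −(2ℓ + (ℓ−1)²(1−λ))/(2ℓ(1 + (ℓ−1)(1−λ))), L₂ = −ℓ^{−1}, and the chain of inequalities −F_V/F_C < −1 < −G_V/G_C < L₁ < −ℓ^{−1}. -/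
/-!
At `P₅` put `c := C₅ > 0` and `m := 1 - λ ∈ (0, 1)`. Then `V₅ = -(1 + c)` and `ℓ = (c + 1) / c`,
and the four partial derivatives are rational in `c, m`:
`F_C = 2c²`, `F_V = 2c² + mc/(c + 1)`, `G_V = -(2c² + 2c + m(1 + 2c))`, `G_C = -2(c + 1)(c + m)`.
Hence `W = 2mc(2c + m)`, `F_C + G_V = -(2c + m(1 + 2c))` and `R = 2c + m(1 - 2c)` with
`R² = (F_C + G_V)² - 4W`; each inequality is then the sign of a polynomial in `c > 0`, `0 < m < 1`.
-/

noncomputable def ell (γ : ℝ) : ℝ := 2 / (γ - 1)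
noncomputable def Vstar (γ lam : ℝ) : ℝ := ell γ * (1 - lam)
noncomputable def k1 (γ lam : ℝ) : ℝ := (1 / ell γ - 1) * (lam - 1)
noncomputable def k0 (γ lam : ℝ) : ℝ := (lam - 1) / ell γ
noncomputable def Dfun (V C : ℝ) : ℝ := (1 + V) ^ 2 - C ^ 2
noncomputable def Gfun (γ lam V C : ℝ) : ℝ :=
  C ^ 2 * (V - Vstar γ lam) - V * (1 + V) * (lam + V)
noncomputable def Ffun (γ lam V C : ℝ) : ℝ :=
  C * (C ^ 2 - (1 + V) ^ 2 + k1 γ lam * (1 + V) - k0 γ lam)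

section Partials

variable (γ lam V C : ℝ)

lemma hasDerivAt_Ffun_V :
    HasDerivAt (fun V => Ffun γ lam V C) (C * (k1 γ lam - 2 * (1 + V))) V := by
  have h : HasDerivAt (fun V : ℝ => 1 + V) 1 V := (hasDerivAt_id V).const_add 1
  refine ((((h.pow 2).const_sub (C ^ 2)).add (h.const_mul (k1 γ lam))).sub_const
    (k0 γ lam) |>.const_mul C).congr_deriv ?_
  norm_num only; ring

lemma hasDerivAt_Ffun_C :
    HasDerivAt (fun C => Ffun γ lam V C)
      (3 * C ^ 2 - (1 + V) ^ 2 + k1 γ lam * (1 + V) - k0 γ lam) C := by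
  refine ((hasDerivAt_id' C).mul ((((hasDerivAt_pow 2 C).sub_const ((1 + V) ^ 2)).add_const
    (k1 γ lam * (1 + V))).sub_const (k0 γ lam))).congr_deriv ?_
  norm_num only; ring

lemma hasDerivAt_Gfun_V :
    HasDerivAt (fun V => Gfun γ lam V C)
      (C ^ 2 - ((1 + V) * (lam + V) + V * (lam + V) + V * (1 + V))) V := by
  have h1 : HasDerivAt (fun V : ℝ => 1 + V) 1 V := (hasDerivAt_id V).const_add 1
  have hl : HasDerivAt (fun V : ℝ => lam + V) 1 V := (hasDerivAt_id V).const_add lam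
  refine ((((hasDerivAt_id V).sub_const (Vstar γ lam)).const_mul (C ^ 2)).sub
    (((hasDerivAt_id' V).fun_mul h1).fun_mul hl)).congr_deriv ?_
  ring

lemma hasDerivAt_Gfun_C :
    HasDerivAt (fun C => Gfun γ lam V C) (2 * C * (V - Vstar γ lam)) C := by
  refine (((hasDerivAt_pow 2 C).mul_const (V - Vstar γ lam)).sub_const
    (V * (1 + V) * (lam + V))).congr_deriv ?_
  norm_num only; ring

end Partials

lemma two_div_sub_three_eq {γ : ℝ} (hγ : γ ≠ 3) : 2 / (γ - 3) = -(1 + (γ - 1) / (3 - γ)) := by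
  have : (3 : ℝ) - γ ≠ 0 := sub_ne_zero.mpr hγ.symm
  have : γ - 3 ≠ 0 := sub_ne_zero.mpr hγ
  field_simp
  ring

lemma ell_eq {γ : ℝ} (hγ1 : γ ≠ 1) (hγ3 : γ ≠ 3) :
    ell γ = ((γ - 1) / (3 - γ) + 1) / ((γ - 1) / (3 - γ)) := by
  have : (3 : ℝ) - γ ≠ 0 := sub_ne_zero.mpr hγ3.symm
  have : γ - 1 ≠ 0 := sub_ne_zero.mpr hγ1
  rw [ell]
  field_simp
  ring

section AtP5

variable {γ lam c V : ℝ}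

lemma k1_eq (hc : 0 < c) (hℓ : ell γ = (c + 1) / c) : k1 γ lam = (1 - lam) / (c + 1) := by
  rw [k1, hℓ]
  field_simp
  ring

lemma k0_eq (hc : 0 < c) (hℓ : ell γ = (c + 1) / c) : k0 γ lam = -((1 - lam) * c / (c + 1)) := by
  rw [k0, hℓ]
  field_simp
  ring

lemma Vstar_eq (hℓ : ell γ = (c + 1) / c) : Vstar γ lam = (c + 1) * (1 - lam) / c := by
  rw [Vstar, hℓ]
  ring

lemma deriv_Ffun_V_eq (hc : 0 < c) (hℓ : ell γ = (c + 1) / c) (hV : V = -(1 + c)) :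
    deriv (fun V => Ffun γ lam V c) V = 2 * c ^ 2 + (1 - lam) * c / (c + 1) := by
  rw [(hasDerivAt_Ffun_V γ lam V c).deriv, k1_eq hc hℓ, hV]
  field_simp
  ring

lemma deriv_Ffun_C_eq (hc : 0 < c) (hℓ : ell γ = (c + 1) / c) (hV : V = -(1 + c)) :
    deriv (fun C => Ffun γ lam V C) c = 2 * c ^ 2 := by
  rw [(hasDerivAt_Ffun_C γ lam V c).deriv, k1_eq hc hℓ, k0_eq hc hℓ, hV]
  field_simp
  ring

lemma deriv_Gfun_V_eq (hV : V = -(1 + c)) :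
    deriv (fun V => Gfun γ lam V c) V = -(2 * c ^ 2 + 2 * c + (1 - lam) * (1 + 2 * c)) := by
  rw [(hasDerivAt_Gfun_V γ lam V c).deriv, hV]
  ring

lemma deriv_Gfun_C_eq (hc : 0 < c) (hℓ : ell γ = (c + 1) / c) (hV : V = -(1 + c)) :
    deriv (fun C => Gfun γ lam V C) c = -(2 * (c + 1) * (c + (1 - lam))) := by
  rw [(hasDerivAt_Gfun_C γ lam V c).deriv, Vstar_eq hℓ, hV]
  field_simp
  ring

end AtP5

theorem linearization_invariants_of_partials {c m ℓ FV FC GV GC : ℝ}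
    (hc : 0 < c) (hm0 : 0 < m) (hm1 : m < 1) (hℓ : ℓ = (c + 1) / c)
    (hFV : FV = 2 * c ^ 2 + m * c / (c + 1)) (hFC : FC = 2 * c ^ 2)
    (hGV : GV = -(2 * c ^ 2 + 2 * c + m * (1 + 2 * c))) (hGC : GC = -(2 * (c + 1) * (c + m))) :
    let W := FC * GV - FV * GC
    let R := c * (2 + (ℓ - 3) * m)
    let L1 := (FC - GV + R) / (2 * GC)
    let L2 := (FC - GV - R) / (2 * GC)
    0 < W ∧ FC + GV < 0 ∧ (FC + GV) ^ 2 - 4 * W = c ^ 2 * (2 + (ℓ - 3) * m) ^ 2 ∧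
    0 < (FC + GV) ^ 2 - 4 * W ∧ 0 < R ∧ R ^ 2 = (FC + GV) ^ 2 - 4 * W ∧
    L1 = -(2 * ℓ + (ℓ - 1) ^ 2 * m) / (2 * ℓ * (1 + (ℓ - 1) * m)) ∧ L2 = -ℓ⁻¹ ∧
    -FV / FC < -1 ∧ -1 < -GV / GC ∧ -GV / GC < L1 ∧ L1 < -ℓ⁻¹ := by
  intro W R L1 L2
  subst hℓ
  have hc1 : 0 < c + 1 := by linarith
  have hcm : 0 < c + m := by linarith
  have hD : 0 < 2 * (c + 1) * (c + m) := by positivity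
  have hW : W = 2 * m * c * (2 * c + m) := by
    simp only [W, hFV, hFC, hGV, hGC]; field_simp; ring
  have hT : FC + GV = -(2 * c + m * (1 + 2 * c)) := by rw [hFC, hGV]; ring
  have hR : R = 2 * c + m * (1 - 2 * c) := by simp only [R]; field_simp; ring
  have hR2 : R ^ 2 = (FC + GV) ^ 2 - 4 * W := by rw [hR, hT, hW]; ring
  have hRpos : 0 < R := by rw [hR]; nlinarith
  have hL1 : L1 = -((2 * c ^ 2 + 2 * c + m) / (2 * (c + 1) * (c + m))) := by
    simp only [L1, hR, hFC, hGV, hGC]; field_simp; ring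
  have hL2 : L2 = -(c / (c + 1)) := by
    simp only [L2, hR, hFC, hGV, hGC]; field_simp; ring
  have hG : -GV / GC = -((2 * c ^ 2 + 2 * c + m * (1 + 2 * c)) / (2 * (c + 1) * (c + m))) := by
    rw [hGV, hGC, neg_neg, div_neg]
  refine ⟨?_, ?_, ?_, hR2 ▸ pow_pos hRpos 2, hRpos, hR2, ?_, ?_, ?_, ?_, ?_, ?_⟩
  · rw [hW]; positivity
  · rw [hT]; nlinarith
  · rw [← hR2, hR]; field_simp; ring
  · rw [hL1, show (c + 1) / c - 1 = c⁻¹ by field_simp; ring]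
    field_simp
  · rw [hL2]; field_simp
  · have : 0 < m * c / (c + 1) := by positivity
    rw [hFV, hFC, div_lt_iff₀ (by positivity)]
    linarith
  · rw [hG, neg_lt_neg_iff, div_lt_one hD]; nlinarith
  · rw [hG, hL1, neg_lt_neg_iff, div_lt_div_iff_of_pos_right hD]; nlinarith
  · rw [hL1, inv_div, neg_lt_neg_iff, div_lt_div_iff₀ hc1 hD]; nlinarith

/-- Wronskian, discriminant and primary/secondary slopes of the
linearization at `P₅` when `0 < λ < 1` and `1 < γ < 3`. -/
theorem stmt_10 (γ lam : ℝ) (hγ1 : 1 < γ) (hγ3 : γ < 3)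
    (hlam0 : 0 < lam) (hlam1 : lam < 1) :
    let V5 : ℝ := 2 / (γ - 3)
    let C5 : ℝ := (γ - 1) / (3 - γ)
    let FV : ℝ := deriv (fun V => Ffun γ lam V C5) V5
    let FC : ℝ := deriv (fun C => Ffun γ lam V5 C) C5
    let GV : ℝ := deriv (fun V => Gfun γ lam V C5) V5
    let GC : ℝ := deriv (fun C => Gfun γ lam V5 C) C5
    let W : ℝ := FC * GV - FV * GC
    let R : ℝ := C5 * (2 + (ell γ - 3) * (1 - lam))
    let L1 : ℝ := (FC - GV + R) / (2 * GC)
    let L2 : ℝ := (FC - GV - R) / (2 * GC)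
    0 < W ∧
    FC + GV < 0 ∧
    (FC + GV) ^ 2 - 4 * W = C5 ^ 2 * (2 + (ell γ - 3) * (1 - lam)) ^ 2 ∧
    0 < (FC + GV) ^ 2 - 4 * W ∧
    0 < R ∧ R ^ 2 = (FC + GV) ^ 2 - 4 * W ∧
    L1 = -(2 * ell γ + (ell γ - 1) ^ 2 * (1 - lam))
          / (2 * ell γ * (1 + (ell γ - 1) * (1 - lam))) ∧
    L2 = -(ell γ)⁻¹ ∧
    -FV / FC < -1 ∧ -1 < -GV / GC ∧ -GV / GC < L1 ∧ L1 < -(ell γ)⁻¹ := by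
  intro V5 C5
  have hc : 0 < C5 := div_pos (by linarith) (by linarith)
  have hℓ : ell γ = (C5 + 1) / C5 := ell_eq (by linarith) (by linarith)
  have hV5 : V5 = -(1 + C5) := two_div_sub_three_eq (by linarith)
  exact linearization_invariants_of_partials hc (by linarith) (by linarith) hℓ
    (deriv_Ffun_V_eq hc hℓ hV5) (deriv_Ffun_C_eq hc hℓ hV5) (deriv_Gfun_V_eq hV5)
    (deriv_Gfun_C_eq hc hℓ hV5)
end

section
/- Assume γ > 3 and 0 < λ < 1, and set λ̂ := (γ−3)/(3γ−5). Then: (i) 0 < λ̂ < 1; (ii) 2 + (ℓ−3)(1−λ) > 0 if and only if λ > λ̂; and (iii) with P₆ := (2/(γ−3), (γ−1)/(3−γ)) and F_V, F_C, G_V, G_C the first-order partial derivatives of F and G evaluated at P₆, the Wronskian satisfies F_C·G_V − F_V·G_C > 0 and the discriminant satisfies (F_C + G_V)² − 4(F_C·G_V − F_V·G_C) = C₆²·(2 + (ℓ−3)(1−λ))², where C₆ := (γ−1)/(3−γ). -/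
/-! With `u := (γ - 1)/(γ - 3)` the point `P₆` is `(u - 1, -u)`, on the sonic line `C = -(1 + V)`,
and `ℓ = (u - 1)/u`. There the Jacobian entries collapse to `F_C = 2u²`,
`F_V = u (2u + (1 - λ)/(u - 1))`, `G_C = -2 (u - 1)(u - 1 + λ)` and `G_V = u - (2u - 1)(u - 1 + λ)`,
so that the determinant is `2u (1 - λ)(2u - 1 + λ)`, positive for `u > 1` and `0 < λ < 1`. -/

section Partials

variable (γ lam V C : ℝ)

theorem deriv_Ffun_V : deriv (fun V => Ffun γ lam V C) V = C * (k1 γ lam - 2 * (1 + V)) := by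
  have h1 : HasDerivAt (fun V : ℝ => 1 + V) 1 V := (hasDerivAt_id' V).const_add 1
  refine HasDerivAt.deriv ?_
  exact ((((h1.pow 2).const_sub (C ^ 2)).add (h1.const_mul (k1 γ lam))).sub_const
    (k0 γ lam)).const_mul C |>.congr_deriv (by push_cast; ring)

theorem deriv_Ffun_C :
    deriv (fun C => Ffun γ lam V C) C
      = 3 * C ^ 2 - (1 + V) ^ 2 + k1 γ lam * (1 + V) - k0 γ lam := by
  refine HasDerivAt.deriv ?_
  exact (hasDerivAt_id' C).mul ((((hasDerivAt_pow 2 C).sub_const ((1 + V) ^ 2)).add_const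
    (k1 γ lam * (1 + V))).sub_const (k0 γ lam)) |>.congr_deriv (by push_cast; ring)

theorem deriv_Gfun_V :
    deriv (fun V => Gfun γ lam V C) V
      = C ^ 2 - ((1 + V) * (lam + V) + V * (lam + V) + V * (1 + V)) := by
  refine HasDerivAt.deriv ?_
  exact (((hasDerivAt_id' V).sub_const (Vstar γ lam)).const_mul (C ^ 2)).sub
    (((hasDerivAt_id' V).mul ((hasDerivAt_id' V).const_add 1)).mul
      ((hasDerivAt_id' V).const_add lam)) |>.congr_deriv (by simp only [Pi.mul_apply]; ring)

theorem deriv_Gfun_C : deriv (fun C => Gfun γ lam V C) C = 2 * C * (V - Vstar γ lam) := by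
  refine HasDerivAt.deriv ?_
  exact ((hasDerivAt_pow 2 C).mul_const (V - Vstar γ lam)).sub_const
    (V * (1 + V) * (lam + V)) |>.congr_deriv (by norm_num)

end Partials

noncomputable def jacDet (γ lam V C : ℝ) : ℝ :=
  deriv (fun C => Ffun γ lam V C) C * deriv (fun V => Gfun γ lam V C) V
    - deriv (fun V => Ffun γ lam V C) V * deriv (fun C => Gfun γ lam V C) C

noncomputable def jacTrace (γ lam V C : ℝ) : ℝ :=
  deriv (fun C => Ffun γ lam V C) C + deriv (fun V => Gfun γ lam V C) V

section LambdaHat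

variable {γ : ℝ}

theorem lamhat_mem_Ioo (hγ : 3 < γ) : (γ - 3) / (3 * γ - 5) ∈ Set.Ioo 0 1 :=
  ⟨div_pos (by linarith) (by linarith), (div_lt_one (by linarith)).2 (by linarith)⟩

theorem two_add_ell_sub_three_mul_eq (hγ : γ ≠ 1) (lam : ℝ) :
    2 + (ell γ - 3) * (1 - lam) = ((3 * γ - 5) * lam - (γ - 3)) / (γ - 1) := by
  have : γ - 1 ≠ 0 := sub_ne_zero.2 hγ
  simp only [ell]
  field_simp
  ring

theorem two_add_ell_sub_three_mul_pos_iff (hγ : 3 < γ) (lam : ℝ) :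
    0 < 2 + (ell γ - 3) * (1 - lam) ↔ (γ - 3) / (3 * γ - 5) < lam := by
  rw [two_add_ell_sub_three_mul_eq (by linarith), div_pos_iff_of_pos_right (by linarith),
    div_lt_iff₀ (by linarith), sub_pos, mul_comm]

end LambdaHat

section PointP6

variable {γ : ℝ} (lam : ℝ)

theorem jacDet_P6 (hγ3 : γ ≠ 3) (hγ1 : γ ≠ 1) :
    jacDet γ lam (2 / (γ - 3)) ((γ - 1) / (3 - γ))
      = 2 * ((γ - 1) / (γ - 3)) * (1 - lam) * (2 * ((γ - 1) / (γ - 3)) - 1 + lam) := by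
  have : γ - 3 ≠ 0 := sub_ne_zero.2 hγ3
  have : 3 - γ ≠ 0 := sub_ne_zero.2 hγ3.symm
  have : γ - 1 ≠ 0 := sub_ne_zero.2 hγ1
  simp only [jacDet, deriv_Ffun_V, deriv_Ffun_C, deriv_Gfun_V, deriv_Gfun_C, ell, Vstar, k1, k0]
  field_simp
  ring

theorem jacTrace_sq_sub_four_jacDet_P6 (hγ3 : γ ≠ 3) (hγ1 : γ ≠ 1) :
    jacTrace γ lam (2 / (γ - 3)) ((γ - 1) / (3 - γ)) ^ 2
        - 4 * jacDet γ lam (2 / (γ - 3)) ((γ - 1) / (3 - γ))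
      = ((γ - 1) / (3 - γ)) ^ 2 * (2 + (ell γ - 3) * (1 - lam)) ^ 2 := by
  have : γ - 3 ≠ 0 := sub_ne_zero.2 hγ3
  have : 3 - γ ≠ 0 := sub_ne_zero.2 hγ3.symm
  have : γ - 1 ≠ 0 := sub_ne_zero.2 hγ1
  simp only [jacTrace, jacDet, deriv_Ffun_V, deriv_Ffun_C, deriv_Gfun_V, deriv_Gfun_C, ell,
    Vstar, k1, k0]
  field_simp
  ring

theorem jacDet_P6_pos (hγ : 3 < γ) (hlam0 : 0 < lam) (hlam1 : lam < 1) :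
    0 < jacDet γ lam (2 / (γ - 3)) ((γ - 1) / (3 - γ)) := by
  have hu : 1 < (γ - 1) / (γ - 3) := by rw [one_lt_div (by linarith)]; linarith
  rw [jacDet_P6 lam (by linarith) (by linarith)]
  have : 0 < 1 - lam := by linarith
  have : 0 < 2 * ((γ - 1) / (γ - 3)) - 1 + lam := by linarith
  positivity

end PointP6

/-- properties of `λ̂ = (γ−3)/(3γ−5)` and of the linearization at
`P₆` when `γ > 3` and `0 < λ < 1`. -/
theorem stmt_12 (γ lam : ℝ) (hγ : 3 < γ) (hlam0 : 0 < lam) (hlam1 : lam < 1) :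
    let lamhat : ℝ := (γ - 3) / (3 * γ - 5)
    let V6 : ℝ := 2 / (γ - 3)
    let C6 : ℝ := (γ - 1) / (3 - γ)
    let FV : ℝ := deriv (fun V => Ffun γ lam V C6) V6
    let FC : ℝ := deriv (fun C => Ffun γ lam V6 C) C6
    let GV : ℝ := deriv (fun V => Gfun γ lam V C6) V6
    let GC : ℝ := deriv (fun C => Gfun γ lam V6 C) C6
    (0 < lamhat ∧ lamhat < 1) ∧
    (0 < 2 + (ell γ - 3) * (1 - lam) ↔ lamhat < lam) ∧
    0 < FC * GV - FV * GC ∧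
    (FC + GV) ^ 2 - 4 * (FC * GV - FV * GC)
      = C6 ^ 2 * (2 + (ell γ - 3) * (1 - lam)) ^ 2 :=
  ⟨lamhat_mem_Ioo hγ, two_add_ell_sub_three_mul_pos_iff hγ lam, jacDet_P6_pos lam hγ hlam0 hlam1,
    jacTrace_sq_sub_four_jacDet_P6 lam (by linarith) (by linarith)⟩
end
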